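/- arXiv:1401.8265 — 16 statements merged into one kernel-verified Lean document; each statement's English description precedes it below -/
import Mathlib

section
/- Let n_d1, n_c1, n_d2, n_c2, n_d3, n_c3 be nonnegative real numbers satisfying the noisy-interference condition n_c1 + n_c2 ≤ min(n_d1, n_d2). Suppose n_11 ∈ [0, n_d1], n_22 ∈ [0, n_d2], n_13 ∈ [0, n_d3], n_23 ∈ [0, n_c3], and that n_21 = (n_11 − (n_d1 − n_c1))^+, n_12 = (n_22 − (n_d2 − n_c2))^+, and moreover n_23 = (n_13 − (n_d3 − n_c3))^+ in case n_c3 ≤ n_d3, while n_13 = (n_23 − (n_c3 − n_d3))^+ in case n_d3 < n_c3. Then (max(n_11, n_13) − n_12)^+ + (n_22 − max(n_21, n_23))^+ ≤ max(n_d3, (n_d1 − n_c2) + (n_d2 − n_c1), (n_d3 − n_c2)^+ + (n_d2 − n_c3)^+). -/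
/-- Lemma 1 / Lemma 2 of the paper: TIN with power control is upper bounded by the
TDMA-TIN sum-rate expression. Here `x⁺ = max x 0`. -/
theorem tin_power_control_le_tdma_tin
    (nd1 nc1 nd2 nc2 nd3 nc3 n11 n22 n13 n23 n21 n12 : ℝ)
    (hd1 : 0 ≤ nd1) (hc1 : 0 ≤ nc1) (hd2 : 0 ≤ nd2) (hc2 : 0 ≤ nc2)
    (hd3 : 0 ≤ nd3) (hc3 : 0 ≤ nc3)
    (hnoisy : nc1 + nc2 ≤ min nd1 nd2)
    (h11l : 0 ≤ n11) (h11u : n11 ≤ nd1)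
    (h22l : 0 ≤ n22) (h22u : n22 ≤ nd2)
    (h13l : 0 ≤ n13) (h13u : n13 ≤ nd3)
    (h23l : 0 ≤ n23) (h23u : n23 ≤ nc3)
    (h21 : n21 = max (n11 - (nd1 - nc1)) 0)
    (h12 : n12 = max (n22 - (nd2 - nc2)) 0)
    (h23 : nc3 ≤ nd3 → n23 = max (n13 - (nd3 - nc3)) 0)
    (h13 : nd3 < nc3 → n13 = max (n23 - (nc3 - nd3)) 0) :
    max (max n11 n13 - n12) 0 + max (n22 - max n21 n23) 0 ≤
      max nd3 (max ((nd1 - nc2) + (nd2 - nc1))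
        (max (nd3 - nc2) 0 + max (nd2 - nc3) 0)) := by
  have hm1 : nc1 + nc2 ≤ nd1 := le_trans hnoisy (min_le_left _ _)
  have hm2 : nc1 + nc2 ≤ nd2 := le_trans hnoisy (min_le_right _ _)
  have h12l : 0 ≤ n12 := by rw [h12]; exact le_max_right _ _
  have h21l : 0 ≤ n21 := by rw [h21]; exact le_max_right _ _
  have h12b : n22 - (nd2 - nc2) ≤ n12 := by rw [h12]; exact le_max_left _ _
  have h21b : n11 - (nd1 - nc1) ≤ n21 := by rw [h21]; exact le_max_left _ _
  have hp1 : nd3 - nc2 ≤ max (nd3 - nc2) 0 := le_max_left _ _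
  have hp1' : (0:ℝ) ≤ max (nd3 - nc2) 0 := le_max_right _ _
  have hp2 : nd2 - nc3 ≤ max (nd2 - nc3) 0 := le_max_left _ _
  have hp2' : (0:ℝ) ≤ max (nd2 - nc3) 0 := le_max_right _ _
  rw [le_max_iff, le_max_iff]
  rcases le_total n13 n11 with hmx | hmx
  · rw [max_eq_left hmx]
    have B : max (n22 - max n21 n23) 0 ≤ max (n22 - n21) 0 :=
      max_le_max (by linarith [le_max_left n21 n23]) le_rfl
    right; left
    rcases max_cases (n11 - n12) 0 with ⟨e1, h1⟩ | ⟨e1, h1⟩ <;>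
      rcases max_cases (n22 - n21) 0 with ⟨e2, h2⟩ | ⟨e2, h2⟩ <;>
      rw [e1] <;>
      [linarith [B, e2]; linarith [B, e2]; linarith [B, e2]; linarith [B, e2]]
  · rw [max_eq_right hmx]
    have B : max (n22 - max n21 n23) 0 ≤ max (n22 - n23) 0 :=
      max_le_max (by linarith [le_max_right n21 n23]) le_rfl
    rcases le_or_gt nc3 nd3 with hc | hc
    · have h23b : n13 - (nd3 - nc3) ≤ n23 := by rw [h23 hc]; exact le_max_left _ _
      rcases max_cases (n13 - n12) 0 with ⟨e1, h1⟩ | ⟨e1, h1⟩ <;>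
        rcases max_cases (n22 - n23) 0 with ⟨e2, h2⟩ | ⟨e2, h2⟩ <;> rw [e1]
      · right; right; linarith [B, e2]
      · left; linarith [B, e2]
      · right; left; linarith [B, e2]
      · left; linarith [B, e2]
    · have h13' := h13 hc
      rcases max_cases (n23 - (nc3 - nd3)) 0 with ⟨e0, h0⟩ | ⟨e0, h0⟩ <;> rw [e0] at h13'
      · rcases max_cases (n13 - n12) 0 with ⟨e1, h1⟩ | ⟨e1, h1⟩ <;>
          rcases max_cases (n22 - n23) 0 with ⟨e2, h2⟩ | ⟨e2, h2⟩ <;> rw [e1]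
        · right; right; linarith [B, e2]
        · left; linarith [B, e2]
        · right; left; linarith [B, e2]
        · left; linarith [B, e2]
      · rcases max_cases (n13 - n12) 0 with ⟨e1, h1⟩ | ⟨e1, h1⟩ <;>
          rcases max_cases (n22 - n23) 0 with ⟨e2, h2⟩ | ⟨e2, h2⟩ <;> rw [e1]
        · right; left; linarith [B, e2]
        · left; linarith [B, e2]
        · right; left; linarith [B, e2]
        · left; linarith [B, e2]
end

section
/- Let n_d1, n_c1, n_d2, n_c2, n_d3, n_c3 be nonnegative real numbers with n_c1 + n_c2 ≤ min(n_d1, n_d2). If either n_d3 ≤ n_d1 − n_c1, or both n_d3 − (n_d1 − 2·n_c1) ≤ n_c3 and n_c3 ≤ n_d2 − n_c2 (regime 1), then max(n_d3, (n_d1 − n_c2) + (n_d2 − n_c1), (n_d3 − n_c2)^+ + (n_d2 − n_c3)^+) = (n_d1 − n_c1) + (n_d2 − n_c2). -/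
/-- Achievability of Theorem 1 in regime 1: the TDMA-TIN sum-rate expression equals
`(n_d1 - n_c1) + (n_d2 - n_c2)`. Here `x⁺ = max x 0`. -/
theorem tdma_tin_regime1
    (nd1 nc1 nd2 nc2 nd3 nc3 : ℝ)
    (hd1 : 0 ≤ nd1) (hc1 : 0 ≤ nc1) (hd2 : 0 ≤ nd2) (hc2 : 0 ≤ nc2)
    (hd3 : 0 ≤ nd3) (hc3 : 0 ≤ nc3)
    (hnoisy : nc1 + nc2 ≤ min nd1 nd2)
    (hreg : nd3 ≤ nd1 - nc1 ∨ (nd3 - (nd1 - 2 * nc1) ≤ nc3 ∧ nc3 ≤ nd2 - nc2)) :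
    max nd3 (max ((nd1 - nc2) + (nd2 - nc1))
        (max (nd3 - nc2) 0 + max (nd2 - nc3) 0)) =
      (nd1 - nc1) + (nd2 - nc2) := by
  have h1 : nc1 + nc2 ≤ nd1 := le_trans hnoisy (min_le_left _ _)
  have h2 : nc1 + nc2 ≤ nd2 := le_trans hnoisy (min_le_right _ _)
  apply le_antisymm
  · apply max_le
    · rcases hreg with h | ⟨ha, hb⟩ <;> linarith
    · apply max_le
      · linarith
      · rcases le_total (nd3 - nc2) 0 with h3 | h3 <;>
        rcases le_total (nd2 - nc3) 0 with h4 | h4 <;>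
        [ rw [max_eq_right h3, max_eq_right h4];
          rw [max_eq_right h3, max_eq_left h4];
          rw [max_eq_left h3, max_eq_right h4];
          rw [max_eq_left h3, max_eq_left h4] ] <;>
        rcases hreg with h | ⟨ha, hb⟩ <;> linarith
  · calc (nd1 - nc1) + (nd2 - nc2) = (nd1 - nc2) + (nd2 - nc1) := by ring
      _ ≤ _ := le_trans (le_max_left _ _) (le_max_right _ _)
end

section
/- Let n_d1, n_c1, n_d2, n_c2, n_d3, n_c3 be nonnegative real numbers with n_c1 + n_c2 ≤ min(n_d1, n_d2). If n_c3 ≤ n_d2 − n_c2 and min(n_c3, n_c1) + (n_d1 − n_c1) ≤ n_d3 − n_c3 (sub-regimes 2A, 2B, 2C), then max(n_d3, (n_d1 − n_c2) + (n_d2 − n_c1), (n_d3 − n_c2)^+ + (n_d2 − n_c3)^+) = (n_d3 − n_c3) + (n_d2 − n_c2). -/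
/-- Achievability of Theorem 1 in sub-regimes 2A, 2B, 2C: the TDMA-TIN sum-rate
expression equals `(n_d3 - n_c3) + (n_d2 - n_c2)`. Here `x⁺ = max x 0`. -/
theorem tdma_tin_regime2ABC
    (nd1 nc1 nd2 nc2 nd3 nc3 : ℝ)
    (hd1 : 0 ≤ nd1) (hc1 : 0 ≤ nc1) (hd2 : 0 ≤ nd2) (hc2 : 0 ≤ nc2)
    (hd3 : 0 ≤ nd3) (hc3 : 0 ≤ nc3)
    (hnoisy : nc1 + nc2 ≤ min nd1 nd2)
    (h1 : nc3 ≤ nd2 - nc2)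
    (h2 : min nc3 nc1 + (nd1 - nc1) ≤ nd3 - nc3) :
    max nd3 (max ((nd1 - nc2) + (nd2 - nc1))
        (max (nd3 - nc2) 0 + max (nd2 - nc3) 0)) =
      (nd3 - nc3) + (nd2 - nc2) := by
  have hn1 : nc1 + nc2 ≤ nd1 := hnoisy.trans (min_le_left _ _)
  have hn2 : nc1 + nc2 ≤ nd2 := hnoisy.trans (min_le_right _ _)
  have hmin0 : 0 ≤ min nc3 nc1 := le_min hc3 hc1
  have h3 : (0:ℝ) ≤ nd3 - nc2 := by nlinarith
  have h4 : (0:ℝ) ≤ nd2 - nc3 := by linarith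
  rw [max_eq_left h3, max_eq_left h4]
  have e : (nd3 - nc2) + (nd2 - nc3) = (nd3 - nc3) + (nd2 - nc2) := by ring
  have hi : max ((nd1 - nc2) + (nd2 - nc1)) ((nd3 - nc3) + (nd2 - nc2)) = (nd3 - nc3) + (nd2 - nc2) := max_eq_right (by linarith)
  rw [e, hi, max_eq_right (by linarith)]
end

section
/- Let n_d1, n_c1, n_d2, n_c2, n_d3, n_c3 be nonnegative real numbers with n_c1 + n_c2 ≤ min(n_d1, n_d2). If n_d1 ≤ n_d3 − n_c3 and n_c1 ≤ n_c3 ≤ n_d2 − n_c2 (sub-regime 2A), then max(n_d1, n_d3) − n_c2 + (n_d2 − max(n_c1, n_c3))^+ = (n_d3 − n_c3) + (n_d2 − n_c2). -/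
/-- Naive-TIN attains the sum-capacity expression of Theorem 1 in sub-regime 2A.
Here `x⁺ = max x 0`. -/
theorem naive_tin_regime2A
    (nd1 nc1 nd2 nc2 nd3 nc3 : ℝ)
    (hd1 : 0 ≤ nd1) (hc1 : 0 ≤ nc1) (hd2 : 0 ≤ nd2) (hc2 : 0 ≤ nc2)
    (hd3 : 0 ≤ nd3) (hc3 : 0 ≤ nc3)
    (hnoisy : nc1 + nc2 ≤ min nd1 nd2)
    (h1 : nd1 ≤ nd3 - nc3)
    (h2 : nc1 ≤ nc3) (h3 : nc3 ≤ nd2 - nc2) :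
    max nd1 nd3 - nc2 + max (nd2 - max nc1 nc3) 0 =
      (nd3 - nc3) + (nd2 - nc2) := by
  rw [max_eq_right (by linarith : nd1 ≤ nd3), max_eq_right h2,
      max_eq_left (by linarith : (0:ℝ) ≤ nd2 - nc3)]
  ring
end

section
/- Let n_d1, n_c1, n_d2, n_c2, n_d3, n_c3 be strictly positive real numbers with n_c1 + n_c2 ≤ min(n_d1, n_d2). Suppose either (sub-regime 2B) n_d1 ≤ n_d3 − n_c3 and n_c3 < n_c1, or (sub-regime 2C) n_d1 − n_c1 ≤ n_d3 − 2·n_c3 and n_d3 − n_c3 < n_d1. Then max(n_d1, n_d3) − n_c2 + (n_d2 − max(n_c1, n_c3))^+ < (n_d3 − n_c3) + (n_d2 − n_c2). -/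
/-- Naive-TIN is strictly suboptimal in sub-regimes 2B and 2C.
Here `x⁺ = max x 0`. -/
theorem naive_tin_subopt_regime2BC
    (nd1 nc1 nd2 nc2 nd3 nc3 : ℝ)
    (hd1 : 0 < nd1) (hc1 : 0 < nc1) (hd2 : 0 < nd2) (hc2 : 0 < nc2)
    (hd3 : 0 < nd3) (hc3 : 0 < nc3)
    (hnoisy : nc1 + nc2 ≤ min nd1 nd2)
    (hreg : (nd1 ≤ nd3 - nc3 ∧ nc3 < nc1) ∨
            (nd1 - nc1 ≤ nd3 - 2 * nc3 ∧ nd3 - nc3 < nd1)) :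
    max nd1 nd3 - nc2 + max (nd2 - max nc1 nc3) 0 <
      (nd3 - nc3) + (nd2 - nc2) := by
  have h2 : nc1 + nc2 ≤ nd2 := le_trans hnoisy (min_le_right _ _)
  have hc : nc3 < nc1 := by rcases hreg with ⟨a, b⟩ | ⟨a, b⟩ <;> linarith
  rw [max_eq_left hc.le, max_eq_left (by linarith : (0:ℝ) ≤ nd2 - nc1)]
  rcases le_total nd1 nd3 with h | h
  · rw [max_eq_right h]; rcases hreg with ⟨a, b⟩ | ⟨a, b⟩ <;> linarith
  · rw [max_eq_left h]; rcases hreg with ⟨a, b⟩ | ⟨a, b⟩ <;> linarith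
end

section
/- Let n_d1, n_c1, n_d2, n_c2, n_d3, n_c3 be strictly positive real numbers with n_c1 + n_c2 ≤ min(n_d1, n_d2). If n_d1 − n_c1 < n_d3 < n_c3 + n_d1 − n_c1 and n_d2 − n_c2 < n_c3 (sub-regime 3A), then max(n_d3, (n_d1 − n_c2) + (n_d2 − n_c1), (n_d3 − n_c2)^+ + (n_d2 − n_c3)^+) < min(n_d3 + (n_d2 − n_c2), n_c3 + (n_d1 − n_c1)). -/
/-- TDMA-TIN is strictly outperformed by IA-CP in sub-regime 3A.
Here `x⁺ = max x 0`. -/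
theorem tdma_tin_subopt_regime3A
    (nd1 nc1 nd2 nc2 nd3 nc3 : ℝ)
    (hd1 : 0 < nd1) (hc1 : 0 < nc1) (hd2 : 0 < nd2) (hc2 : 0 < nc2)
    (hd3 : 0 < nd3) (hc3 : 0 < nc3)
    (hnoisy : nc1 + nc2 ≤ min nd1 nd2)
    (h1 : nd1 - nc1 < nd3) (h2 : nd3 < nc3 + nd1 - nc1)
    (h3 : nd2 - nc2 < nc3) :
    max nd3 (max ((nd1 - nc2) + (nd2 - nc1))
        (max (nd3 - nc2) 0 + max (nd2 - nc3) 0)) <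
      min (nd3 + (nd2 - nc2)) (nc3 + (nd1 - nc1)) := by
  have hm1 : nc1 + nc2 ≤ nd1 := le_trans hnoisy (min_le_left _ _)
  have hm2 : nc1 + nc2 ≤ nd2 := le_trans hnoisy (min_le_right _ _)
  rw [lt_min_iff]
  constructor <;>
  · rcases max_cases (nd3 - nc2) 0 with ⟨e1, h4⟩ | ⟨e1, h4⟩ <;>
    rcases max_cases (nd2 - nc3) 0 with ⟨e2, h5⟩ | ⟨e2, h5⟩ <;>
    simp only [max_lt_iff, e1, e2] <;>
    refine ⟨by linarith, by linarith, by linarith⟩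
end

section
/- Let n_d1, n_c1, n_d2, n_c2, n_d3, n_c3 be strictly positive real numbers with n_c1 + n_c2 ≤ min(n_d1, n_d2). If n_c3 + n_d1 − n_c1 < n_d3 < n_d1 + n_c3 and n_d2 − n_c2 < n_c3 (sub-regime 3B), then max(n_d3, (n_d1 − n_c2) + (n_d2 − n_c1), (n_d3 − n_c2)^+ + (n_d2 − n_c3)^+) = n_d3, and n_d3 < min(n_d1 + n_c3, (2·n_d3 − n_c3) − (n_d1 − n_c1)). -/
/-- TDMA-TIN is strictly outperformed by IA-CP in sub-regime 3B.
Here `x⁺ = max x 0`. -/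
theorem tdma_tin_subopt_regime3B
    (nd1 nc1 nd2 nc2 nd3 nc3 : ℝ)
    (hd1 : 0 < nd1) (hc1 : 0 < nc1) (hd2 : 0 < nd2) (hc2 : 0 < nc2)
    (hd3 : 0 < nd3) (hc3 : 0 < nc3)
    (hnoisy : nc1 + nc2 ≤ min nd1 nd2)
    (h1 : nc3 + nd1 - nc1 < nd3) (h2 : nd3 < nd1 + nc3)
    (h3 : nd2 - nc2 < nc3) :
    max nd3 (max ((nd1 - nc2) + (nd2 - nc1))
        (max (nd3 - nc2) 0 + max (nd2 - nc3) 0)) = nd3 ∧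
      nd3 < min (nd1 + nc3) ((2 * nd3 - nc3) - (nd1 - nc1)) := by
  have hm1 : nc1 + nc2 ≤ nd1 := le_trans hnoisy (min_le_left _ _)
  constructor
  · have ha : (nd1 - nc2) + (nd2 - nc1) ≤ nd3 := by nlinarith
    have hb : max (nd3 - nc2) 0 + max (nd2 - nc3) 0 ≤ nd3 := by
      rcases le_total (nd2 - nc3) 0 with h | h <;>
        rcases le_total (nd3 - nc2) 0 with h' | h' <;>
          simp [max_eq_left, max_eq_right, *] <;> nlinarith
    rw [max_eq_left]
    exact max_le ha hb
  · exact lt_min h2 (by linarith)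
end

section
/- Let n_d1, n_c1, n_d2, n_c2, n_d3, n_c3 be strictly positive real numbers with n_c1 + n_c2 ≤ min(n_d1, n_d2). Suppose max(n_d1 − n_c1, n_d1 − 2·n_c1 + n_c3) < n_d3 < min(n_d1 − n_c1 + 2·n_c3, n_d1 + n_c3), n_c3 ≤ n_d2 − n_c2, and n_d3 − n_c3 ≠ n_d1 − n_c1 (sub-regime 3C). Set μ = max(n_d3 − n_c3, n_d1 − n_c1) and ν = min(n_d3 − n_c3, n_d1 − n_c1). Then 0 < min(μ − ν, n_d1 − (n_c1 − n_c3)^+ − μ, n_d3 − (n_c3 − n_c1)^+ − μ). -/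
/-- In sub-regime 3C the rate of the aligned signal of the IA-CP scheme is strictly
positive. Here `x⁺ = max x 0`. -/
theorem ia_cp_alignment_rate_pos_regime3C
    (nd1 nc1 nd2 nc2 nd3 nc3 μ ν : ℝ)
    (hd1 : 0 < nd1) (hc1 : 0 < nc1) (hd2 : 0 < nd2) (hc2 : 0 < nc2)
    (hd3 : 0 < nd3) (hc3 : 0 < nc3)
    (hnoisy : nc1 + nc2 ≤ min nd1 nd2)
    (h1 : max (nd1 - nc1) (nd1 - 2 * nc1 + nc3) < nd3)
    (h2 : nd3 < min (nd1 - nc1 + 2 * nc3) (nd1 + nc3))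
    (h3 : nc3 ≤ nd2 - nc2)
    (h4 : nd3 - nc3 ≠ nd1 - nc1)
    (hμ : μ = max (nd3 - nc3) (nd1 - nc1))
    (hν : ν = min (nd3 - nc3) (nd1 - nc1)) :
    0 < min (μ - ν)
        (min (nd1 - max (nc1 - nc3) 0 - μ) (nd3 - max (nc3 - nc1) 0 - μ)) := by
  have h1a := (max_lt_iff.mp h1).1
  have h1b := (max_lt_iff.mp h1).2
  have h2a := (lt_min_iff.mp h2).1
  have h2b := (lt_min_iff.mp h2).2
  have h4' : nd3 - nc3 ≠ nd1 - nc1 := h4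
  subst hμ hν
  rcases le_total (nd3 - nc3) (nd1 - nc1) with h | h <;>
    rcases le_total (nc1 - nc3) 0 with hh | hh <;>
    rcases le_total (nc3 - nc1) 0 with hk | hk <;>
    simp [max_eq_left, max_eq_right, min_eq_left, min_eq_right, *] <;>
    (try constructor) <;> (try constructor) <;>
    first
      | linarith
      | exact lt_of_le_of_ne h h4'
      | exact lt_of_le_of_ne h (Ne.symm h4')
end

section
/- Let n_d1, n_c1, n_d2, n_c2, n_d3, n_c3 be nonnegative real numbers with n_c1 + n_c2 ≤ min(n_d1, n_d2) and n_d3 − n_c3 = n_d1 − n_c1. Then max(n_d1 − n_c1, n_c2) + max(n_c1, max(n_c3, n_d2 − n_c2)) = max(n_d3, (n_d1 − n_c1) + (n_d2 − n_c2)). -/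
/-- On the line n_d3 - n_c3 = n_d1 - n_c1, the upper bound of Appendix E equals the
TDMA-TIN sum-rate, establishing optimality of TDMA-TIN there. -/
theorem tdma_tin_opt_special_line
    (nd1 nc1 nd2 nc2 nd3 nc3 : ℝ)
    (hd1 : 0 ≤ nd1) (hc1 : 0 ≤ nc1) (hd2 : 0 ≤ nd2) (hc2 : 0 ≤ nc2)
    (hd3 : 0 ≤ nd3) (hc3 : 0 ≤ nc3)
    (hnoisy : nc1 + nc2 ≤ min nd1 nd2)
    (hline : nd3 - nc3 = nd1 - nc1) :
    max (nd1 - nc1) nc2 + max nc1 (max nc3 (nd2 - nc2)) =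
      max nd3 ((nd1 - nc1) + (nd2 - nc2)) := by
  have h1 : nc1 + nc2 ≤ nd1 := le_trans hnoisy (min_le_left _ _)
  have h2 : nc1 + nc2 ≤ nd2 := le_trans hnoisy (min_le_right _ _)
  rw [max_eq_left (by linarith : nc2 ≤ nd1 - nc1),
    max_eq_right (le_max_of_le_right (by linarith : nc1 ≤ nd2 - nc2))]
  rcases le_total nc3 (nd2 - nc2) with h | h
  · rw [max_eq_right h, max_eq_right (by linarith)]
  · rw [max_eq_left h, max_eq_left (by linarith)]
    linarith
end

section
/- Let ρ > 1 be a real number and let α_d1, α_c1, α_d2, α_c2, α_d3, α_c3 be strictly positive reals with α_c1 + α_c2 ≤ min(α_d1, α_d2), α_d3 ≤ α_d1 − α_c1, and α_c3 ≤ α_c1 (sub-regime 1A). Then [log₂(1 + ρ^{α_c2} + ρ^{α_d3} + ρ^{α_d1}/(1 + ρ^{α_c1})) + log₂(1 + ρ^{α_c1} + ρ^{α_d2}/(1 + ρ^{α_c2}))] − [log₂(1 + (ρ^{α_d1} + ρ^{α_d3})/(1 + ρ^{α_c2})) + log₂(1 + ρ^{α_d2}/(1 + ρ^{α_c1} + ρ^{α_c3}))]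 < 3 + 2·log₂ 3. -/
open Real

/-- Key arithmetic inequality: the ratio of the bound to the TIN rate is less than 72. -/
lemma key_ratio (A B C3 D1 D2 D3 : ℝ) (hA : 1 < A) (hB : 1 < B) (hC3 : 0 < C3)
    (hD3 : 1 < D3) (hab1 : A * B ≤ D1) (hab2 : A * B ≤ D2)
    (had3 : A * D3 ≤ D1) (hc3 : C3 ≤ A) :
    (1 + B + D3 + D1 / (1 + A)) * (1 + A + D2 / (1 + B)) <
      72 * ((1 + (D1 + D3) / (1 + B)) * (1 + D2 / (1 + A + C3))) := by
  have hP : (0:ℝ) < 1 + A := by linarith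
  have hQ : (0:ℝ) < 1 + B := by linarith
  have hS : (0:ℝ) < 1 + A + C3 := by linarith
  have hD1 : 1 < D1 := by nlinarith
  have hD2 : 1 < D2 := by nlinarith
  -- X1 ≤ 7 D1 / (1+A)
  have hX1 : 1 + B + D3 + D1 / (1 + A) ≤ 7 * D1 / (1 + A) := by
    have h6 : 1 + B + D3 ≤ 6 * D1 / (1 + A) := by
      rw [le_div_iff₀ hP]
      nlinarith
    have : 7 * D1 / (1 + A) = 6 * D1 / (1 + A) + D1 / (1 + A) := by ring
    linarith
  -- X2 ≤ 5 D2 / (1+B)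
  have hX2 : 1 + A + D2 / (1 + B) ≤ 5 * D2 / (1 + B) := by
    have h4 : 1 + A ≤ 4 * D2 / (1 + B) := by
      rw [le_div_iff₀ hQ]
      nlinarith
    have : 5 * D2 / (1 + B) = 4 * D2 / (1 + B) + D2 / (1 + B) := by ring
    linarith
  -- Y1 ≥ D1/(1+B)
  have hY1 : D1 / (1 + B) ≤ 1 + (D1 + D3) / (1 + B) := by
    have : D1 / (1 + B) ≤ (D1 + D3) / (1 + B) := by gcongr <;> linarith
    linarith
  -- Y2 ≥ D2/(2(1+A))
  have hY2 : D2 / (2 * (1 + A)) ≤ 1 + D2 / (1 + A + C3) := by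
    have : D2 / (2 * (1 + A)) ≤ D2 / (1 + A + C3) := by
      apply div_le_div_of_nonneg_left (by linarith) hS (by linarith)
    linarith
  have hX1pos : 0 < 1 + B + D3 + D1 / (1 + A) := by positivity
  have hX2pos : 0 < 1 + A + D2 / (1 + B) := by positivity
  have hY1pos : 0 < D1 / (1 + B) := by positivity
  have hY2pos : 0 < D2 / (2 * (1 + A)) := by positivity
  have hprod : (1 + B + D3 + D1 / (1 + A)) * (1 + A + D2 / (1 + B)) ≤
      (7 * D1 / (1 + A)) * (5 * D2 / (1 + B)) :=
    mul_le_mul hX1 hX2 hX2pos.le (by positivity)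
  have heq : (7 * D1 / (1 + A)) * (5 * D2 / (1 + B)) =
      70 * ((D1 / (1 + B)) * (D2 / (2 * (1 + A)))) := by
    field_simp
    ring
  have hYprod : (D1 / (1 + B)) * (D2 / (2 * (1 + A))) ≤
      (1 + (D1 + D3) / (1 + B)) * (1 + D2 / (1 + A + C3)) :=
    mul_le_mul hY1 hY2 hY2pos.le (by positivity)
  have hYpos : 0 < (1 + (D1 + D3) / (1 + B)) * (1 + D2 / (1 + A + C3)) := by positivity
  calc (1 + B + D3 + D1 / (1 + A)) * (1 + A + D2 / (1 + B))
      ≤ 70 * ((D1 / (1 + B)) * (D2 / (2 * (1 + A)))) := by rw [← heq]; exact hprod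
    _ ≤ 70 * ((1 + (D1 + D3) / (1 + B)) * (1 + D2 / (1 + A + C3))) := by linarith
    _ < 72 * ((1 + (D1 + D3) / (1 + B)) * (1 + D2 / (1 + A + C3))) := by linarith

/-- Corollary 2, sub-regime 1A: naive-TIN is within `3 + 2·log₂ 3` bits of the
sum-capacity upper bound (12) of Theorem 2. -/
theorem naive_tin_constant_gap_1A
    (ρ ad1 ac1 ad2 ac2 ad3 ac3 : ℝ)
    (hρ : 1 < ρ)
    (had1 : 0 < ad1) (hac1 : 0 < ac1) (had2 : 0 < ad2) (hac2 : 0 < ac2)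
    (had3 : 0 < ad3) (hac3 : 0 < ac3)
    (hnoisy : ac1 + ac2 ≤ min ad1 ad2)
    (h1 : ad3 ≤ ad1 - ac1) (h2 : ac3 ≤ ac1) :
    (Real.logb 2 (1 + ρ ^ ac2 + ρ ^ ad3 + ρ ^ ad1 / (1 + ρ ^ ac1)) +
        Real.logb 2 (1 + ρ ^ ac1 + ρ ^ ad2 / (1 + ρ ^ ac2))) -
      (Real.logb 2 (1 + (ρ ^ ad1 + ρ ^ ad3) / (1 + ρ ^ ac2)) +
        Real.logb 2 (1 + ρ ^ ad2 / (1 + ρ ^ ac1 + ρ ^ ac3))) <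
      3 + 2 * Real.logb 2 3 := by
  have hρ0 : (0:ℝ) < ρ := by linarith
  have one_lt : ∀ x : ℝ, 0 < x → 1 < ρ ^ x := fun x hx =>
    Real.one_lt_rpow_iff_of_pos hρ0 |>.mpr (Or.inl ⟨hρ, hx⟩)
  have hA : 1 < ρ ^ ac1 := one_lt _ hac1
  have hB : 1 < ρ ^ ac2 := one_lt _ hac2
  have hC3 : (0:ℝ) < ρ ^ ac3 := Real.rpow_pos_of_pos hρ0 _
  have hD3 : 1 < ρ ^ ad3 := one_lt _ had3
  have hab1 : ρ ^ ac1 * ρ ^ ac2 ≤ ρ ^ ad1 := by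
    rw [← Real.rpow_add hρ0]
    exact Real.rpow_le_rpow_left_iff hρ |>.mpr (hnoisy.trans (min_le_left _ _))
  have hab2 : ρ ^ ac1 * ρ ^ ac2 ≤ ρ ^ ad2 := by
    rw [← Real.rpow_add hρ0]
    exact Real.rpow_le_rpow_left_iff hρ |>.mpr (hnoisy.trans (min_le_right _ _))
  have had31 : ρ ^ ac1 * ρ ^ ad3 ≤ ρ ^ ad1 := by
    rw [← Real.rpow_add hρ0]
    exact Real.rpow_le_rpow_left_iff hρ |>.mpr (by linarith)
  have hc3le : ρ ^ ac3 ≤ ρ ^ ac1 := Real.rpow_le_rpow_left_iff hρ |>.mpr h2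
  have key := key_ratio (ρ ^ ac1) (ρ ^ ac2) (ρ ^ ac3) (ρ ^ ad1) (ρ ^ ad2) (ρ ^ ad3)
    hA hB hC3 hD3 hab1 hab2 had31 hc3le
  set X1 := 1 + ρ ^ ac2 + ρ ^ ad3 + ρ ^ ad1 / (1 + ρ ^ ac1) with hX1def
  set X2 := 1 + ρ ^ ac1 + ρ ^ ad2 / (1 + ρ ^ ac2) with hX2def
  set Y1 := 1 + (ρ ^ ad1 + ρ ^ ad3) / (1 + ρ ^ ac2) with hY1def
  set Y2 := 1 + ρ ^ ad2 / (1 + ρ ^ ac1 + ρ ^ ac3) with hY2def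
  have hkey : X1 * X2 < 72 * (Y1 * Y2) := key
  have hX1pos : 0 < X1 := by rw [hX1def]; positivity
  have hX2pos : 0 < X2 := by rw [hX2def]; positivity
  have hY1pos : 0 < Y1 := by rw [hY1def]; positivity
  have hY2pos : 0 < Y2 := by rw [hY2def]; positivity
  have hlhs : Real.logb 2 X1 + Real.logb 2 X2 - (Real.logb 2 Y1 + Real.logb 2 Y2)
      = Real.logb 2 ((X1 * X2) / (Y1 * Y2)) := by
    rw [Real.logb_div (by positivity) (by positivity),
      Real.logb_mul hX1pos.ne' hX2pos.ne', Real.logb_mul hY1pos.ne' hY2pos.ne']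
  have hrhs : (3:ℝ) + 2 * Real.logb 2 3 = Real.logb 2 72 := by
    have h72 : (72:ℝ) = 2 ^ (3:ℕ) * 3 ^ (2:ℕ) := by norm_num
    rw [h72, Real.logb_mul (by norm_num) (by norm_num), Real.logb_pow, Real.logb_pow,
      Real.logb_self_eq_one (by norm_num)]
    push_cast
    ring
  rw [hlhs, hrhs]
  apply Real.logb_lt_logb one_lt_two (by positivity)
  rw [div_lt_iff₀ (by positivity)]
  linarith
end

section
/- Let ρ > 1 be a real number and let α_d1, α_c1, α_d2, α_c2, α_d3, α_c3 be strictly positive reals with α_c1 + α_c2 ≤ min(α_d1, α_d2) and α_d3 ≤ α_d1 − α_c1 (sub-regimes 1A and 1B). Then [log₂(1 + ρ^{α_c2} + ρ^{α_d3} + ρ^{α_d1}/(1 + ρ^{α_c1})) + log₂(1 + ρ^{α_c1} + ρ^{α_d2}/(1 + ρ^{α_c2}))] − [log₂(1 + ρ^{α_d1}/(1 + ρ^{α_c2})) + log₂(1 + ρ^{α_d2}/(1 + ρ^{α_c1}))] < 4 + log₂ 3. -/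
open Real

lemma core_gap (a b c d e : ℝ) (ha : 1 < a) (hb : 1 < b) (hc : 1 < c) (hd : 1 < d)
    (he : 1 < e) (h1 : c*d ≤ a) (h2 : c*d ≤ b) (h3 : e*c ≤ a) :
    ((1+d+e)*(1+c)+a)*((1+c)*(1+d)+b) < 48*((1+d+a)*(1+c+b)) := by
  nlinarith [mul_pos (sub_pos.2 ha) (sub_pos.2 hb), mul_pos (sub_pos.2 hc) (sub_pos.2 hd),
    mul_le_mul h1 h2 (by positivity) (le_of_lt (lt_trans one_pos ha)),
    mul_le_mul h3 h2 (by positivity) (le_of_lt (lt_trans one_pos ha)),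
    mul_pos (sub_pos.2 ha) (sub_pos.2 hc), mul_pos (sub_pos.2 hb) (sub_pos.2 hd),
    mul_pos (sub_pos.2 he) (sub_pos.2 hd), mul_pos (sub_pos.2 ha) (sub_pos.2 hd),
    mul_pos (sub_pos.2 hb) (sub_pos.2 hc)]

/-- Corollary 3, sub-regimes 1A and 1B: TDMA-TIN is within `4 + log₂ 3` bits of the
sum-capacity upper bound (12) of Theorem 2. -/
theorem tdma_tin_constant_gap_1AB
    (ρ ad1 ac1 ad2 ac2 ad3 ac3 : ℝ)
    (hρ : 1 < ρ)
    (had1 : 0 < ad1) (hac1 : 0 < ac1) (had2 : 0 < ad2) (hac2 : 0 < ac2)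
    (had3 : 0 < ad3) (hac3 : 0 < ac3)
    (hnoisy : ac1 + ac2 ≤ min ad1 ad2)
    (h1 : ad3 ≤ ad1 - ac1) :
    (Real.logb 2 (1 + ρ ^ ac2 + ρ ^ ad3 + ρ ^ ad1 / (1 + ρ ^ ac1)) +
        Real.logb 2 (1 + ρ ^ ac1 + ρ ^ ad2 / (1 + ρ ^ ac2))) -
      (Real.logb 2 (1 + ρ ^ ad1 / (1 + ρ ^ ac2)) +
        Real.logb 2 (1 + ρ ^ ad2 / (1 + ρ ^ ac1))) <
      4 + Real.logb 2 3 := by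
  have hρ0 : 0 < ρ := lt_trans one_pos hρ
  set a := ρ ^ ad1 with ha_def
  set b := ρ ^ ad2 with hb_def
  set c := ρ ^ ac1 with hc_def
  set d := ρ ^ ac2 with hd_def
  set e := ρ ^ ad3 with he_def
  have ha : 1 < a := Real.one_lt_rpow_iff_of_pos hρ0 |>.2 (Or.inl ⟨hρ, had1⟩)
  have hb : 1 < b := Real.one_lt_rpow_iff_of_pos hρ0 |>.2 (Or.inl ⟨hρ, had2⟩)
  have hc : 1 < c := Real.one_lt_rpow_iff_of_pos hρ0 |>.2 (Or.inl ⟨hρ, hac1⟩)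
  have hd : 1 < d := Real.one_lt_rpow_iff_of_pos hρ0 |>.2 (Or.inl ⟨hρ, hac2⟩)
  have he : 1 < e := Real.one_lt_rpow_iff_of_pos hρ0 |>.2 (Or.inl ⟨hρ, had3⟩)
  have hcd_a : c * d ≤ a := by
    rw [hc_def, hd_def, ha_def, ← Real.rpow_add hρ0]
    exact Real.rpow_le_rpow_of_exponent_le hρ.le (hnoisy.trans (min_le_left _ _))
  have hcd_b : c * d ≤ b := by
    rw [hc_def, hd_def, hb_def, ← Real.rpow_add hρ0]
    exact Real.rpow_le_rpow_of_exponent_le hρ.le (hnoisy.trans (min_le_right _ _))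
  have hec_a : e * c ≤ a := by
    rw [he_def, hc_def, ha_def, ← Real.rpow_add hρ0]
    exact Real.rpow_le_rpow_of_exponent_le hρ.le (by linarith)
  clear_value a b c d e
  have hc1 : (0:ℝ) < 1 + c := by linarith
  have hd1 : (0:ℝ) < 1 + d := by linarith
  -- positivity of the four log arguments
  have hF1 : (0:ℝ) < 1 + d + e + a / (1 + c) := by positivity
  have hF2 : (0:ℝ) < 1 + c + b / (1 + d) := by positivity
  have hG1 : (0:ℝ) < 1 + a / (1 + d) := by positivity
  have hG2 : (0:ℝ) < 1 + b / (1 + c) := by positivity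
  have key : ((1+d+e)*(1+c)+a)*((1+c)*(1+d)+b) < 48*((1+d+a)*(1+c+b)) :=
    core_gap a b c d e ha hb hc hd he hcd_a hcd_b hec_a
  have hratio : (1 + d + e + a / (1 + c)) * (1 + c + b / (1 + d)) <
      48 * ((1 + a / (1 + d)) * (1 + b / (1 + c))) := by
    have e1 : 1 + d + e + a / (1 + c) = ((1+d+e)*(1+c)+a) / (1+c) := by
      field_simp
    have e2 : 1 + c + b / (1 + d) = ((1+c)*(1+d)+b) / (1+d) := by
      field_simp
    have e3 : 1 + a / (1 + d) = (1+d+a) / (1+d) := by field_simp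
    have e4 : 1 + b / (1 + c) = (1+c+b) / (1+c) := by field_simp
    rw [e1, e2, e3, e4, div_mul_div_comm, div_mul_div_comm, ← mul_div_assoc,
      div_lt_div_iff₀ (by positivity) (by positivity)]
    nlinarith [mul_lt_mul_of_pos_right key (mul_pos hd1 hc1)]
  have hlog : Real.logb 2 (1 + d + e + a / (1 + c)) + Real.logb 2 (1 + c + b / (1 + d)) -
      (Real.logb 2 (1 + a / (1 + d)) + Real.logb 2 (1 + b / (1 + c))) =
      Real.logb 2 (((1 + d + e + a / (1 + c)) * (1 + c + b / (1 + d))) /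
        ((1 + a / (1 + d)) * (1 + b / (1 + c)))) := by
    rw [Real.logb_div (by positivity) (by positivity),
      Real.logb_mul (ne_of_gt hF1) (ne_of_gt hF2),
      Real.logb_mul (ne_of_gt hG1) (ne_of_gt hG2)]
  rw [hlog]
  have h48 : (4:ℝ) + Real.logb 2 3 = Real.logb 2 48 := by
    rw [show (48:ℝ) = 2^(4:ℕ) * 3 by norm_num,
      Real.logb_mul (by norm_num) (by norm_num), Real.logb_pow]
    simp [Real.logb_self_eq_one]
  rw [h48]
  apply Real.logb_lt_logb one_lt_two (by positivity)
  rw [div_lt_iff₀ (by positivity)]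
  calc (1 + d + e + a / (1 + c)) * (1 + c + b / (1 + d))
      < 48 * ((1 + a / (1 + d)) * (1 + b / (1 + c))) := hratio
    _ = 48 * ((1 + a / (1 + d)) * (1 + b / (1 + c))) := rfl
end

section
/- Let ρ > 1 be a real number and let α_d1, α_c1, α_d2, α_c2, α_d3, α_c3 be strictly positive reals with α_c1 + α_c2 ≤ min(α_d1, α_d2), α_d1 − α_c1 < α_d3, α_c3 ≤ α_d2 − α_c2, and α_d3 − α_c3 ≤ α_d1 − 2·α_c1 (sub-regime 1C). Then [log₂(1 + ρ^{α_c2} + (ρ^{α_d1} + ρ^{α_d3})/(1 + ρ^{α_c1 − α_d1}·(ρ^{α_d1} + ρ^{α_d3}))) + log₂(1 + ρ^{α_c3} + ρ^{α_c1} + ρ^{α_d2}/(1 + ρ^{α_c2})) + 1] − [log₂(1 + ρ^{α_d1}/(1 + ρ^{α_c2})) + log₂(1 + ρ^{α_d2}/(1 + ρ^{α_c1}))] < 7. -/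
open Real

/-- Corollary 3, sub-regime 1C: TDMA-TIN is within 7 bits of the sum-capacity upper
bound (14) of Theorem 2. -/
theorem tdma_tin_constant_gap_1C
    (ρ ad1 ac1 ad2 ac2 ad3 ac3 : ℝ)
    (hρ : 1 < ρ)
    (had1 : 0 < ad1) (hac1 : 0 < ac1) (had2 : 0 < ad2) (hac2 : 0 < ac2)
    (had3 : 0 < ad3) (hac3 : 0 < ac3)
    (hnoisy : ac1 + ac2 ≤ min ad1 ad2)
    (h1 : ad1 - ac1 < ad3) (h2 : ac3 ≤ ad2 - ac2)
    (h3 : ad3 - ac3 ≤ ad1 - 2 * ac1) :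
    (Real.logb 2 (1 + ρ ^ ac2 +
          (ρ ^ ad1 + ρ ^ ad3) / (1 + ρ ^ (ac1 - ad1) * (ρ ^ ad1 + ρ ^ ad3))) +
        Real.logb 2 (1 + ρ ^ ac3 + ρ ^ ac1 + ρ ^ ad2 / (1 + ρ ^ ac2)) + 1) -
      (Real.logb 2 (1 + ρ ^ ad1 / (1 + ρ ^ ac2)) +
        Real.logb 2 (1 + ρ ^ ad2 / (1 + ρ ^ ac1))) < 7 := by
  have hρ0 : (0:ℝ) < ρ := lt_trans one_pos hρ
  have hn1 : ac1 + ac2 ≤ ad1 := le_trans hnoisy (min_le_left _ _)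
  have hn2 : ac1 + ac2 ≤ ad2 := le_trans hnoisy (min_le_right _ _)
  have P : ∀ x : ℝ, 0 < ρ ^ x := fun x => Real.rpow_pos_of_pos hρ0 x
  -- monotonicity of rpow in exponent
  have M : ∀ x y : ℝ, x ≤ y → ρ ^ x ≤ ρ ^ y := fun x y h =>
    Real.rpow_le_rpow_of_exponent_le hρ.le h
  have one_le : ∀ x : ℝ, 0 ≤ x → 1 ≤ ρ ^ x := fun x hx =>
    Real.one_le_rpow hρ.le hx
  -- abbreviations
  set A1 := 1 + ρ ^ ac2 +
      (ρ ^ ad1 + ρ ^ ad3) / (1 + ρ ^ (ac1 - ad1) * (ρ ^ ad1 + ρ ^ ad3)) with hA1def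
  set A2 := 1 + ρ ^ ac3 + ρ ^ ac1 + ρ ^ ad2 / (1 + ρ ^ ac2) with hA2def
  set B1 := 1 + ρ ^ ad1 / (1 + ρ ^ ac2) with hB1def
  set B2 := 1 + ρ ^ ad2 / (1 + ρ ^ ac1) with hB2def
  -- key algebraic identity: ρ^(ac1-ad1) * ρ^(ad1-ac1) = 1
  have hinv : ρ ^ (ac1 - ad1) * ρ ^ (ad1 - ac1) = 1 := by
    rw [← Real.rpow_add hρ0]; norm_num
  -- A1 ≤ 3 * ρ^(ad1-ac1)
  have hF : (ρ ^ ad1 + ρ ^ ad3) / (1 + ρ ^ (ac1 - ad1) * (ρ ^ ad1 + ρ ^ ad3))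
      ≤ ρ ^ (ad1 - ac1) := by
    rw [div_le_iff₀ (by positivity)]
    have h := P (ac1 - ad1)
    have h2' := P ad1
    have h3' := P ad3
    nlinarith [P (ad1 - ac1), mul_pos (P (ad1 - ac1)) (P (ac1 - ad1))]
  have hone1 : (1:ℝ) ≤ ρ ^ (ad1 - ac1) := one_le _ (by linarith)
  have hA1b : A1 ≤ 3 * ρ ^ (ad1 - ac1) := by
    have := M ac2 (ad1 - ac1) (by linarith)
    rw [hA1def]; linarith [hF]
  -- A2 ≤ 4 * ρ^(ad2-ac2)
  have hd2 : ρ ^ ad2 / (1 + ρ ^ ac2) ≤ ρ ^ (ad2 - ac2) := by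
    rw [div_le_iff₀ (by positivity)]
    have : ρ ^ (ad2 - ac2) * ρ ^ ac2 = ρ ^ ad2 := by
      rw [← Real.rpow_add hρ0]; ring_nf
    nlinarith [P (ad2 - ac2)]
  have hA2b : A2 ≤ 4 * ρ ^ (ad2 - ac2) := by
    have e1 := M ac3 (ad2 - ac2) h2
    have e2 := M ac1 (ad2 - ac2) (by linarith)
    have e3 : (1:ℝ) ≤ ρ ^ (ad2 - ac2) := one_le _ (by linarith)
    rw [hA2def]; linarith
  -- B1 ≥ ρ^(ad1-ac2)/2
  have hB1b : ρ ^ (ad1 - ac2) / 2 ≤ B1 := by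
    have key : ρ ^ (ad1 - ac2) * (1 + ρ ^ ac2) ≤ ρ ^ ad1 * 2 := by
      have : ρ ^ (ad1 - ac2) * ρ ^ ac2 = ρ ^ ad1 := by
        rw [← Real.rpow_add hρ0]; ring_nf
      have h1' : (1:ℝ) ≤ ρ ^ ac2 := one_le _ hac2.le
      nlinarith [P (ad1 - ac2)]
    have : ρ ^ (ad1 - ac2) / 2 ≤ ρ ^ ad1 / (1 + ρ ^ ac2) := by
      rw [div_le_div_iff₀ (by norm_num) (by positivity)]; linarith
    rw [hB1def]; linarith
  -- B2 ≥ ρ^(ad2-ac1)/2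
  have hB2b : ρ ^ (ad2 - ac1) / 2 ≤ B2 := by
    have key : ρ ^ (ad2 - ac1) * (1 + ρ ^ ac1) ≤ ρ ^ ad2 * 2 := by
      have : ρ ^ (ad2 - ac1) * ρ ^ ac1 = ρ ^ ad2 := by
        rw [← Real.rpow_add hρ0]; ring_nf
      have h1' : (1:ℝ) ≤ ρ ^ ac1 := one_le _ hac1.le
      nlinarith [P (ad2 - ac1)]
    have : ρ ^ (ad2 - ac1) / 2 ≤ ρ ^ ad2 / (1 + ρ ^ ac1) := by
      rw [div_le_div_iff₀ (by norm_num) (by positivity)]; linarith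
    rw [hB2def]; linarith
  -- positivity of arguments
  have hA1pos : 0 < A1 := by rw [hA1def]; positivity
  have hA2pos : 0 < A2 := by rw [hA2def]; positivity
  have hB1pos : 0 < B1 := by rw [hB1def]; positivity
  have hB2pos : 0 < B2 := by rw [hB2def]; positivity
  have hb2 : (1:ℝ) < 2 := one_lt_two
  -- log bounds
  have lA1 : Real.logb 2 A1 ≤ Real.logb 2 3 + (ad1 - ac1) * Real.logb 2 ρ := by
    calc Real.logb 2 A1 ≤ Real.logb 2 (3 * ρ ^ (ad1 - ac1)) :=
          Real.logb_le_logb_of_le hb2 hA1pos hA1b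
      _ = Real.logb 2 3 + (ad1 - ac1) * Real.logb 2 ρ := by
          rw [Real.logb_mul (by norm_num) (ne_of_gt (P _)),
            Real.logb_rpow_eq_mul_logb_of_pos hρ0]
  have lA2 : Real.logb 2 A2 ≤ Real.logb 2 4 + (ad2 - ac2) * Real.logb 2 ρ := by
    calc Real.logb 2 A2 ≤ Real.logb 2 (4 * ρ ^ (ad2 - ac2)) :=
          Real.logb_le_logb_of_le hb2 hA2pos hA2b
      _ = Real.logb 2 4 + (ad2 - ac2) * Real.logb 2 ρ := by
          rw [Real.logb_mul (by norm_num) (ne_of_gt (P _)),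
            Real.logb_rpow_eq_mul_logb_of_pos hρ0]
  have lB1 : (ad1 - ac2) * Real.logb 2 ρ - 1 ≤ Real.logb 2 B1 := by
    calc (ad1 - ac2) * Real.logb 2 ρ - 1
        = Real.logb 2 (ρ ^ (ad1 - ac2) / 2) := by
          rw [Real.logb_div (ne_of_gt (P _)) (by norm_num),
            Real.logb_rpow_eq_mul_logb_of_pos hρ0, Real.logb_self_eq_one one_lt_two]
      _ ≤ Real.logb 2 B1 := Real.logb_le_logb_of_le hb2 (by positivity) hB1b
  have lB2 : (ad2 - ac1) * Real.logb 2 ρ - 1 ≤ Real.logb 2 B2 := by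
    calc (ad2 - ac1) * Real.logb 2 ρ - 1
        = Real.logb 2 (ρ ^ (ad2 - ac1) / 2) := by
          rw [Real.logb_div (ne_of_gt (P _)) (by norm_num),
            Real.logb_rpow_eq_mul_logb_of_pos hρ0, Real.logb_self_eq_one one_lt_two]
      _ ≤ Real.logb 2 B2 := Real.logb_le_logb_of_le hb2 (by positivity) hB2b
  have l3 : Real.logb 2 3 < 2 := by
    rw [Real.logb_lt_iff_lt_rpow hb2 (by norm_num)]
    rw [show (2:ℝ) ^ (2:ℝ) = 4 by
      rw [show (2:ℝ) = ((2:ℕ):ℝ) from rfl, Real.rpow_natCast]; norm_num]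
    norm_num
  have l4 : Real.logb 2 4 = 2 := by
    rw [show (4:ℝ) = 2 ^ (2:ℝ) by
      rw [show (2:ℝ) = ((2:ℕ):ℝ) from rfl, Real.rpow_natCast]; norm_num]
    exact Real.logb_rpow (by norm_num) (by norm_num)
  linarith
end

section
/- Let ρ > 1 be a real number and let α_d1, α_c1, α_d2, α_c2, α_d3, α_c3 be strictly positive reals with α_c1 + α_c2 ≤ min(α_d1, α_d2), α_d1 ≤ α_d3 − α_c3, and α_c3 ≤ α_d2 − α_c2 (sub-regimes 2A and 2B). Then [log₂(1 + ρ^{α_c2} + ρ^{α_d1} + ρ^{α_d3}/(1 + ρ^{α_c3})) + log₂(1 + ρ^{α_c3} + ρ^{α_d2}/(1 + ρ^{α_c2}))] − [log₂(1 + ρ^{α_d3}/(1 + ρ^{α_c2})) + log₂(1 + ρ^{α_d2}/(1 + ρ^{α_c3}))] < 4 + log₂ 3. -/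
open Real

lemma key_ineq_2AB (A B C D E : ℝ) (hA : 1 ≤ A) (hB : 1 ≤ B) (hC : 1 ≤ C) (hD : 1 ≤ D)
    (hE : 1 ≤ E) (hAB : A ≤ B) (hBD : B * D ≤ C) (hAD : A * D ≤ E) :
    (1 + A + B + C / (1 + D)) * (1 + D + E / (1 + A)) <
      48 * ((1 + C / (1 + A)) * (1 + E / (1 + D))) := by
  have hA0 : (0:ℝ) < A := by linarith
  have hD0 : (0:ℝ) < D := by linarith
  have h1A : (0:ℝ) < 1 + A := by linarith
  have h1D : (0:ℝ) < 1 + D := by linarith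
  have hBx : B ≤ C / D := (le_div_iff₀ hD0).mpr hBD
  have hDy : D ≤ E / A := (le_div_iff₀ hA0).mpr (by nlinarith)
  have hN1 : 1 + A + B + C / (1 + D) ≤ 4 * (C / D) := by
    have hc : C / (1 + D) ≤ C / D := by
      rw [div_le_div_iff₀ h1D hD0]; nlinarith
    linarith [le_trans hAB hBx, le_trans hB hBx]
  have hN2 : 1 + D + E / (1 + A) ≤ 3 * (E / A) := by
    have hc : E / (1 + A) ≤ E / A := by
      rw [div_le_div_iff₀ h1A hA0]; nlinarith
    linarith [le_trans hD hDy]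
  have hxy : (C / D) * (E / A) ≤ 4 * ((C / (1 + A)) * (E / (1 + D))) := by
    have hrw : 4 * ((C / (1 + A)) * (E / (1 + D))) = (4 * (C * E)) / ((1 + A) * (1 + D)) := by
      field_simp
    rw [hrw, div_mul_div_comm, div_le_div_iff₀ (by positivity) (by positivity)]
    have h4 : (1 + A) * (1 + D) ≤ 4 * (D * A) := by nlinarith
    have hCE : (0:ℝ) ≤ C * E := by positivity
    nlinarith [mul_le_mul_of_nonneg_left h4 hCE]
  have hmul : (1 + A + B + C / (1 + D)) * (1 + D + E / (1 + A)) ≤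
      (4 * (C / D)) * (3 * (E / A)) := by
    apply mul_le_mul hN1 hN2 (by positivity) (by positivity)
  have hlast : 48 * ((C / (1 + A)) * (E / (1 + D))) <
      48 * ((1 + C / (1 + A)) * (1 + E / (1 + D))) := by
    have p1 : 0 < C / (1 + A) := by positivity
    have p2 : 0 < E / (1 + D) := by positivity
    nlinarith
  nlinarith [hmul, hxy, hlast]

/-- Corollary 3, sub-regimes 2A and 2B: TDMA-TIN is within `4 + log₂ 3` bits of the
sum-capacity upper bound (13) of Theorem 2. -/
theorem tdma_tin_constant_gap_2AB
    (ρ ad1 ac1 ad2 ac2 ad3 ac3 : ℝ)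
    (hρ : 1 < ρ)
    (had1 : 0 < ad1) (hac1 : 0 < ac1) (had2 : 0 < ad2) (hac2 : 0 < ac2)
    (had3 : 0 < ad3) (hac3 : 0 < ac3)
    (hnoisy : ac1 + ac2 ≤ min ad1 ad2)
    (h1 : ad1 ≤ ad3 - ac3) (h2 : ac3 ≤ ad2 - ac2) :
    (Real.logb 2 (1 + ρ ^ ac2 + ρ ^ ad1 + ρ ^ ad3 / (1 + ρ ^ ac3)) +
        Real.logb 2 (1 + ρ ^ ac3 + ρ ^ ad2 / (1 + ρ ^ ac2))) -
      (Real.logb 2 (1 + ρ ^ ad3 / (1 + ρ ^ ac2)) +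
        Real.logb 2 (1 + ρ ^ ad2 / (1 + ρ ^ ac3))) <
      4 + Real.logb 2 3 := by
  have hρ0 : (0:ℝ) < ρ := lt_trans one_pos hρ
  have one_le : ∀ t : ℝ, 0 < t → (1:ℝ) ≤ ρ ^ t := fun t ht =>
    Real.one_le_rpow hρ.le ht.le
  set A := ρ ^ ac2 with hAdef
  set B := ρ ^ ad1 with hBdef
  set C := ρ ^ ad3 with hCdef
  set D := ρ ^ ac3 with hDdef
  set E := ρ ^ ad2 with hEdef
  have hA : (1:ℝ) ≤ A := one_le _ hac2
  have hB : (1:ℝ) ≤ B := one_le _ had1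
  have hC : (1:ℝ) ≤ C := one_le _ had3
  have hD : (1:ℝ) ≤ D := one_le _ hac3
  have hE : (1:ℝ) ≤ E := one_le _ had2
  have hAB : A ≤ B := Real.rpow_le_rpow_of_exponent_le hρ.le
    (by have := le_trans hnoisy (min_le_left ad1 ad2); linarith)
  have hBD : B * D ≤ C := by
    rw [hBdef, hDdef, hCdef, ← Real.rpow_add hρ0]
    exact Real.rpow_le_rpow_of_exponent_le hρ.le (by linarith)
  have hAD : A * D ≤ E := by
    rw [hAdef, hDdef, hEdef, ← Real.rpow_add hρ0]
    exact Real.rpow_le_rpow_of_exponent_le hρ.le (by linarith)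
  have key := key_ineq_2AB A B C D E hA hB hC hD hE hAB hBD hAD
  have hA0 : (0:ℝ) < A := by linarith
  have hD0 : (0:ℝ) < D := by linarith
  have hN1 : (0:ℝ) < 1 + A + B + C / (1 + D) := by positivity
  have hN2 : (0:ℝ) < 1 + D + E / (1 + A) := by positivity
  have hD1 : (0:ℝ) < 1 + C / (1 + A) := by positivity
  have hD2 : (0:ℝ) < 1 + E / (1 + D) := by positivity
  have e1 : Real.logb 2 (1 + A + B + C / (1 + D)) + Real.logb 2 (1 + D + E / (1 + A)) =
      Real.logb 2 ((1 + A + B + C / (1 + D)) * (1 + D + E / (1 + A))) :=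
    (Real.logb_mul hN1.ne' hN2.ne').symm
  have e2 : Real.logb 2 (1 + C / (1 + A)) + Real.logb 2 (1 + E / (1 + D)) =
      Real.logb 2 ((1 + C / (1 + A)) * (1 + E / (1 + D))) :=
    (Real.logb_mul hD1.ne' hD2.ne').symm
  have e3 : Real.logb 2 (48 * ((1 + C / (1 + A)) * (1 + E / (1 + D)))) =
      Real.logb 2 48 + Real.logb 2 ((1 + C / (1 + A)) * (1 + E / (1 + D))) :=
    Real.logb_mul (by norm_num) (by positivity)
  have hlog : Real.logb 2 ((1 + A + B + C / (1 + D)) * (1 + D + E / (1 + A))) <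
      Real.logb 2 (48 * ((1 + C / (1 + A)) * (1 + E / (1 + D)))) :=
    Real.logb_lt_logb (by norm_num) (by positivity) key
  have h48 : Real.logb 2 (48:ℝ) = 4 + Real.logb 2 3 := by
    rw [show (48:ℝ) = 2 ^ (4:ℕ) * 3 by norm_num,
      Real.logb_mul (by norm_num) (by norm_num), Real.logb_pow]
    have h2 : Real.logb 2 2 = 1 := Real.logb_self_eq_one (by norm_num)
    rw [h2]; push_cast; ring
  rw [e1, e2]
  linarith [hlog, e3, h48]
end

section
/- Let ρ > 1 be a real number and let α_d1, α_c1, α_d2, α_c2, α_d3, α_c3 be strictly positive reals with α_c1 + α_c2 ≤ min(α_d1, α_d2), α_d1 ≤ α_d3 − α_c3, and α_d2 − α_c2 < α_c3 (sub-regime 2D). Then [log₂(1 + ρ^{α_c2} + ρ^{α_d1} + ρ^{α_d3}/(1 + ρ^{α_c3})) + log₂(1 + ρ^{α_c3} + ρ^{α_d2}/(1 + ρ^{α_c2}))] − log₂(1 + ρ^{α_d3}) < 2 + log₂ 3. -/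
open Real

/-- Corollary 3, sub-regime 2D: TDMA-TIN is within `2 + log₂ 3` bits of the
sum-capacity upper bound (13) of Theorem 2. -/
theorem tdma_tin_constant_gap_2D
    (ρ ad1 ac1 ad2 ac2 ad3 ac3 : ℝ)
    (hρ : 1 < ρ)
    (had1 : 0 < ad1) (hac1 : 0 < ac1) (had2 : 0 < ad2) (hac2 : 0 < ac2)
    (had3 : 0 < ad3) (hac3 : 0 < ac3)
    (hnoisy : ac1 + ac2 ≤ min ad1 ad2)
    (h1 : ad1 ≤ ad3 - ac3) (h2 : ad2 - ac2 < ac3) :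
    (Real.logb 2 (1 + ρ ^ ac2 + ρ ^ ad1 + ρ ^ ad3 / (1 + ρ ^ ac3)) +
        Real.logb 2 (1 + ρ ^ ac3 + ρ ^ ad2 / (1 + ρ ^ ac2))) -
      Real.logb 2 (1 + ρ ^ ad3) <
      2 + Real.logb 2 3 := by
  have hρ0 : (0:ℝ) < ρ := lt_trans one_pos hρ
  have hpow : ∀ a : ℝ, (0:ℝ) < ρ ^ a := fun a => Real.rpow_pos_of_pos hρ0 a
  have hone : ∀ a : ℝ, 0 ≤ a → (1:ℝ) ≤ ρ ^ a := fun a ha =>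
    Real.one_le_rpow hρ.le ha
  have hmono : ∀ a b : ℝ, a ≤ b → ρ ^ a ≤ ρ ^ b := fun a b hab =>
    Real.rpow_le_rpow_left_iff hρ |>.mpr hab
  have hac2le : ac2 ≤ ad1 := le_trans (le_add_of_nonneg_left hac1.le)
    (le_trans hnoisy (min_le_left _ _))
  set A := 1 + ρ ^ ac2 + ρ ^ ad1 + ρ ^ ad3 / (1 + ρ ^ ac3) with hA
  set B := 1 + ρ ^ ac3 + ρ ^ ad2 / (1 + ρ ^ ac2) with hB
  set C := 1 + ρ ^ ad3 with hC
  have hApos : 0 < A := by positivity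
  have hBpos : 0 < B := by positivity
  have hCpos : 0 < C := by positivity
  -- bound A ≤ 4 ρ^(ad3 - ac3)
  have hdivA : ρ ^ ad3 / (1 + ρ ^ ac3) ≤ ρ ^ (ad3 - ac3) := by
    rw [Real.rpow_sub hρ0, div_le_div_iff₀ (by positivity) (hpow _)]
    nlinarith [hpow ad3, hpow ac3]
  have hAle : A ≤ 4 * ρ ^ (ad3 - ac3) := by
    have h1' : (1:ℝ) ≤ ρ ^ (ad3 - ac3) := hone _ (le_trans had1.le h1)
    have h2' : ρ ^ ac2 ≤ ρ ^ (ad3 - ac3) := hmono _ _ (le_trans hac2le h1)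
    have h3' : ρ ^ ad1 ≤ ρ ^ (ad3 - ac3) := hmono _ _ h1
    simp only [hA]; linarith
  -- bound B < 3 ρ^ac3
  have hdivB : ρ ^ ad2 / (1 + ρ ^ ac2) ≤ ρ ^ (ad2 - ac2) := by
    rw [Real.rpow_sub hρ0, div_le_div_iff₀ (by positivity) (hpow _)]
    nlinarith [hpow ad2, hpow ac2]
  have hBlt : B < 3 * ρ ^ ac3 := by
    have h1' : (1:ℝ) ≤ ρ ^ ac3 := hone _ hac3.le
    have h2' : ρ ^ (ad2 - ac2) < ρ ^ ac3 := Real.rpow_lt_rpow_left_iff hρ |>.mpr h2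
    simp only [hB]; linarith
  -- product bound
  have hprod : A * B < 12 * C := by
    have : A * B < (4 * ρ ^ (ad3 - ac3)) * (3 * ρ ^ ac3) :=
      mul_lt_mul' hAle hBlt hBpos.le (by positivity)
    have heq : (4 * ρ ^ (ad3 - ac3)) * (3 * ρ ^ ac3) = 12 * ρ ^ ad3 := by
      rw [show (4:ℝ) * ρ ^ (ad3 - ac3) * (3 * ρ ^ ac3)
          = 12 * (ρ ^ (ad3 - ac3) * ρ ^ ac3) by ring, ← Real.rpow_add hρ0]
      ring_nf
    have : A * B < 12 * ρ ^ ad3 := heq ▸ this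
    have hCgt : ρ ^ ad3 < C := by simp only [hC]; linarith
    nlinarith
  have hlog : Real.logb 2 A + Real.logb 2 B = Real.logb 2 (A * B) :=
    (Real.logb_mul hApos.ne' hBpos.ne').symm
  have hlog2 : Real.logb 2 (A * B) < Real.logb 2 (12 * C) :=
    Real.logb_lt_logb one_lt_two (by positivity) hprod
  have hlog3 : Real.logb 2 (12 * C) = Real.logb 2 12 + Real.logb 2 C :=
    Real.logb_mul (by norm_num) hCpos.ne'
  have h12 : Real.logb 2 12 = 2 + Real.logb 2 3 := by
    rw [show (12:ℝ) = 4 * 3 by norm_num, Real.logb_mul (by norm_num) (by norm_num),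
      show (4:ℝ) = 2 ^ (2:ℕ) by norm_num, Real.logb_pow]
    norm_num [Real.logb_self_eq_one]
  linarith [hlog2, hlog3 ▸ hlog2]
end

section
/- Let a1, a3, b1, b3, c, d be strictly positive real numbers with a1·b3 ≠ a3·b1, and set τ = a1/(a1 + a3), so τ ∈ (0,1). Then τ·log₂(1 + (a1/τ)/(1 + c)) + (1 − τ)·log₂(1 + (a3/(1 − τ))/(1 + c)) + τ·log₂(1 + d/(1 + b1/τ)) + (1 − τ)·log₂(1 + d/(1 + b3/(1 − τ))) > log₂(1 + (a1 + a3)/(1 + c)) + log₂(1 + d/(1 + b1 + b3)). -/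
open Real Set

/-! With `τ = a1/(a1+a3)` both signal powers `a1/τ` and `a3/(1-τ)` equal `a1+a3`, so the first two
terms of the TDMA-TIN rate add up to the first naive-TIN term. The remaining terms compare by strict
convexity of `t ↦ log(1 + d/t)` on `(0, ∞)`: the `τ`-mixture of `1 + b1/τ` and `1 + b3/(1-τ)` is
`1 + b1 + b3`, and the two points differ exactly when `a1·b3 ≠ a3·b1`. -/

lemma hasDerivAt_log_add_sub_log {d t : ℝ} (ht : t ≠ 0) (htd : t + d ≠ 0) :
    HasDerivAt (fun t => log (t + d) - log t) ((t + d)⁻¹ - t⁻¹) t := by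
  have h := ((hasDerivAt_id t).add_const d).log htd
  simp only [id, one_div] at h
  exact h.sub (hasDerivAt_log ht)

lemma strictConvexOn_log_add_sub_log {d : ℝ} (hd : 0 < d) :
    StrictConvexOn ℝ (Ioi 0) fun t => log (t + d) - log t := by
  have hderiv : ∀ t ∈ Ioi (0 : ℝ), HasDerivAt (fun t => log (t + d) - log t) ((t + d)⁻¹ - t⁻¹) t :=
    fun t (ht : 0 < t) => hasDerivAt_log_add_sub_log ht.ne' (by positivity)
  refine StrictMonoOn.strictConvexOn_of_deriv (convex_Ioi 0)
    (fun t ht => (hderiv t ht).continuousAt.continuousWithinAt) ?_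
  rw [interior_Ioi]
  intro s (hs : 0 < s) t (ht : 0 < t) hst
  rw [(hderiv s hs).deriv, (hderiv t ht).deriv]
  field_simp
  nlinarith [mul_pos (mul_pos hd (sub_pos.2 hst)) (by positivity : 0 < s + t + d)]

lemma strictConvexOn_logb_one_add_div {b d : ℝ} (hb : 1 < b) (hd : 0 < d) :
    StrictConvexOn ℝ (Ioi 0) fun t => logb b (1 + d / t) := by
  have hlog : ∀ t ∈ Ioi (0 : ℝ), logb b (1 + d / t) = (log (t + d) - log t) / log b := by
    intro t (ht : 0 < t)
    rw [logb, ← log_div (by positivity) ht.ne', add_div, div_self ht.ne', add_comm]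
  refine ⟨convex_Ioi 0, fun x hx y hy hxy θ η hθ hη hθη => ?_⟩
  have key := (strictConvexOn_log_add_sub_log hd).2 hx hy hxy hθ hη hθη
  simp only [smul_eq_mul] at key ⊢
  have hmix : θ * x + η * y ∈ Ioi (0 : ℝ) := by
    simpa only [smul_eq_mul] using convex_Ioi 0 hx hy hθ.le hη.le hθη
  rw [hlog x hx, hlog y hy, hlog _ hmix]
  have hlogb : 0 < log b := log_pos hb
  rw [mul_div_assoc', mul_div_assoc', ← add_div, div_lt_div_iff_of_pos_right hlogb]
  exact key

theorem tdma_tin_beats_naive_tin_general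
    (a1 a3 b1 b3 c d τ : ℝ)
    (ha1 : 0 < a1) (ha3 : 0 < a3) (hb1 : 0 < b1) (hb3 : 0 < b3)
    (hd : 0 < d)
    (hne : a1 * b3 ≠ a3 * b1)
    (hτ : τ = a1 / (a1 + a3)) :
    τ * Real.logb 2 (1 + (a1 / τ) / (1 + c)) +
        (1 - τ) * Real.logb 2 (1 + (a3 / (1 - τ)) / (1 + c)) +
        τ * Real.logb 2 (1 + d / (1 + b1 / τ)) +
        (1 - τ) * Real.logb 2 (1 + d / (1 + b3 / (1 - τ))) >
      Real.logb 2 (1 + (a1 + a3) / (1 + c)) +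
        Real.logb 2 (1 + d / (1 + b1 + b3)) := by
  have hτ' : 1 - τ = a3 / (a1 + a3) := by rw [hτ]; field_simp; ring
  have hτ0 : 0 < τ := hτ ▸ by positivity
  have hτ1 : 0 < 1 - τ := hτ' ▸ by positivity
  have hx : a1 / τ = a1 + a3 := by rw [hτ]; field_simp
  have hy : a3 / (1 - τ) = a1 + a3 := by rw [hτ']; field_simp
  have hmix : τ * (1 + b1 / τ) + (1 - τ) * (1 + b3 / (1 - τ)) = 1 + b1 + b3 := by
    field_simp; ring
  have hxy : 1 + b1 / τ ≠ 1 + b3 / (1 - τ) := by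
    rw [hτ', hτ, Ne, add_right_inj, div_div_eq_mul_div, div_div_eq_mul_div,
      div_eq_div_iff ha1.ne' ha3.ne']
    contrapose! hne
    nlinarith
  have hjensen := (strictConvexOn_logb_one_add_div one_lt_two hd).2
    (show 0 < 1 + b1 / τ by positivity) (show 0 < 1 + b3 / (1 - τ) by positivity) hxy hτ0 hτ1
    (by ring)
  simp only [smul_eq_mul, hmix] at hjensen
  rw [hx, hy]
  linarith

/-- Corollary 4 (key inequality): TDMA-TIN with time-sharing parameter
`τ = a1/(a1+a3)` strictly outperforms naive-TIN whenever `a1·b3 ≠ a3·b1`. -/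
theorem tdma_tin_beats_naive_tin
    (a1 a3 b1 b3 c d τ : ℝ)
    (ha1 : 0 < a1) (ha3 : 0 < a3) (hb1 : 0 < b1) (hb3 : 0 < b3)
    (hc : 0 < c) (hd : 0 < d)
    (hne : a1 * b3 ≠ a3 * b1)
    (hτ : τ = a1 / (a1 + a3)) :
    τ * Real.logb 2 (1 + (a1 / τ) / (1 + c)) +
        (1 - τ) * Real.logb 2 (1 + (a3 / (1 - τ)) / (1 + c)) +
        τ * Real.logb 2 (1 + d / (1 + b1 / τ)) +
        (1 - τ) * Real.logb 2 (1 + d / (1 + b3 / (1 - τ))) >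
      Real.logb 2 (1 + (a1 + a3) / (1 + c)) +
        Real.logb 2 (1 + d / (1 + b1 + b3)) :=
  tdma_tin_beats_naive_tin_general a1 a3 b1 b3 c d τ ha1 ha3 hb1 hb3 hd hne hτ
end

section
/- Let α_d1, α_c1, α_d2, α_c2, α_d3, α_c3 be strictly positive real numbers with α_c1 + α_c2 ≤ min(α_d1, α_d2) and α_d3 − α_c3 = α_d1 − α_c1. Then (α_d1 − α_c1) + (α_d2 − α_c2) + (α_c3 − (α_d2 − α_c2))^+ + (1/2)·min(α_c1, α_c3) > max(α_d3, (α_d1 − α_c2) + (α_d2 − α_c1), (α_d3 − α_c2)^+ + (α_d2 − α_c3)^+). -/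
/-- On the line α_d3 - α_c3 = α_d1 - α_c1, the GDoF of the phase-alignment scheme
PA-CP strictly exceeds the GDoF of TDMA-TIN. Here `x⁺ = max x 0`. -/
theorem pa_cp_beats_tdma_tin_special_line
    (ad1 ac1 ad2 ac2 ad3 ac3 : ℝ)
    (had1 : 0 < ad1) (hac1 : 0 < ac1) (had2 : 0 < ad2) (hac2 : 0 < ac2)
    (had3 : 0 < ad3) (hac3 : 0 < ac3)
    (hnoisy : ac1 + ac2 ≤ min ad1 ad2)
    (hline : ad3 - ac3 = ad1 - ac1) :
    (ad1 - ac1) + (ad2 - ac2) + max (ac3 - (ad2 - ac2)) 0 +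
        (1 / 2) * min ac1 ac3 >
      max ad3 (max ((ad1 - ac2) + (ad2 - ac1))
        (max (ad3 - ac2) 0 + max (ad2 - ac3) 0)) := by
  have hA : ac1 + ac2 ≤ ad1 := le_trans hnoisy (min_le_left _ _)
  have hB : ac1 + ac2 ≤ ad2 := le_trans hnoisy (min_le_right _ _)
  rw [gt_iff_lt, max_lt_iff, max_lt_iff]
  refine ⟨?_, ⟨?_, ?_⟩⟩ <;>
  · simp only [max_def, min_def]
    split_ifs <;> linarith
end
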